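/- arXiv:2007.02784 — 3 statements merged into one kernel-verified Lean document; each statement's English description precedes it below -/
import Mathlib

section
/- For any fixed x ∈ ℝⁿ, J_σ(x)/σ → (√π/2)·‖x‖₀ as σ → 0⁺, where ‖x‖₀ is the number of nonzero components of x, J_σ(x) = Σ_j Φ_σ(|x_j|), and Φ_σ(t) = ∫_0^t e^{-τ²/σ²} dτ. -/
noncomputable def Phi (σ x : ℝ) : ℝ := ∫ τ in (0:ℝ)..x, Real.exp (-τ^2 / σ^2)

noncomputable def Jerf (σ : ℝ) {n : ℕ} (x : Fin n → ℝ) : ℝ := ∑ j, Phi σ |x j|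

open Filter MeasureTheory Real

lemma aux_pos (a : ℝ) (ha : 0 < a) :
    Tendsto (fun σ => Phi σ a / σ) (nhdsWithin 0 (Set.Ioi 0))
      (nhds (Real.sqrt Real.pi / 2)) := by
  have hint : IntegrableOn (fun u : ℝ => Real.exp (-u ^ 2)) (Set.Ioi 0) := by
    have := (integrable_exp_neg_mul_sq (b := 1) one_pos).integrableOn (s := Set.Ioi 0)
    simpa using this
  have hb : Tendsto (fun σ : ℝ => a / σ) (nhdsWithin 0 (Set.Ioi 0)) atTop := by
    have : Tendsto (fun σ : ℝ => σ⁻¹) (nhdsWithin 0 (Set.Ioi 0)) atTop := tendsto_inv_nhdsGT_zero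
    have h2 : Tendsto (fun σ : ℝ => a * σ⁻¹) (nhdsWithin 0 (Set.Ioi 0)) atTop :=
      Tendsto.const_mul_atTop ha this
    simpa [div_eq_mul_inv] using h2
  have key := intervalIntegral_tendsto_integral_Ioi 0
    (f := fun u : ℝ => Real.exp (-u ^ 2)) hint hb
  have hval : (∫ u in Set.Ioi (0:ℝ), Real.exp (-u ^ 2)) = Real.sqrt Real.pi / 2 := by
    have := integral_gaussian_Ioi 1
    simpa using this
  rw [hval] at key
  refine key.congr' ?_
  filter_upwards [self_mem_nhdsWithin] with σ (hσ : 0 < σ)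
  have hσ' : σ ≠ 0 := ne_of_gt hσ
  have : Phi σ a = σ • ∫ u in (0:ℝ)..(a/σ), Real.exp (-u ^ 2) := by
    rw [Phi]
    have : ∀ τ : ℝ, Real.exp (-τ ^ 2 / σ ^ 2) = Real.exp (-(τ / σ) ^ 2) := by
      intro τ; congr 1; field_simp
    simp_rw [this]
    rw [intervalIntegral.integral_comp_div (fun u => Real.exp (-u ^ 2)) hσ']
    simp
  rw [this]
  simp [smul_eq_mul]
  field_simp

theorem stmt_7 (n : ℕ) (x : Fin n → ℝ) :
    Filter.Tendsto (fun σ => Jerf σ x / σ) (nhdsWithin 0 (Set.Ioi 0))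
      (nhds ((Real.sqrt Real.pi / 2) * (Finset.univ.filter (fun j => x j ≠ 0)).card)) := by
  have hsum : ∀ σ : ℝ, Jerf σ x / σ = ∑ j, Phi σ |x j| / σ := by
    intro σ; rw [Jerf, Finset.sum_div]
  simp_rw [hsum]
  have hterm : ∀ j : Fin n, Tendsto (fun σ => Phi σ |x j| / σ) (nhdsWithin 0 (Set.Ioi 0))
      (nhds (if x j ≠ 0 then Real.sqrt Real.pi / 2 else 0)) := by
    intro j
    by_cases h : x j = 0
    · simp [h, Phi, intervalIntegral.integral_same]
    · simpa [h] using aux_pos |x j| (abs_pos.2 h)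
  have := tendsto_finset_sum Finset.univ (fun j _ => hterm j)
  convert this using 2
  rw [Finset.sum_ite, Finset.sum_const, Finset.sum_const]
  simp [mul_comm]
end

section
/- Let A ∈ ℝ^{m×n}, σ > 0, and S ⊆ {1,…,n}. Suppose A satisfies the generalized null space property relative to J_σ and S: for every nonzero v in ker(A), J_σ(v_S) < J_σ(v_{S^c}), where v_S denotes v restricted to S (zero off S). Then every vector x ∈ ℝⁿ supported on S is the unique minimizer of J_σ(z) over all z with Az = Ax. -/
def restr {n : ℕ} (S : Finset (Fin n)) (v : Fin n → ℝ) : Fin n → ℝ :=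
  fun j => if j ∈ S then v j else 0

lemma phi_intble (σ a b : ℝ) :
    IntervalIntegrable (fun τ => Real.exp (-τ^2 / σ^2)) MeasureTheory.volume a b :=
  Continuous.intervalIntegrable (by continuity) a b

lemma Phi_zero (σ : ℝ) : Phi σ 0 = 0 := intervalIntegral.integral_same

lemma Phi_mono (σ : ℝ) : Monotone (Phi σ) := by
  intro a b hab
  have h : Phi σ b - Phi σ a = ∫ τ in a..b, Real.exp (-τ^2 / σ^2) := by
    rw [Phi, Phi, ← intervalIntegral.integral_interval_sub_left (phi_intble σ 0 b) (phi_intble σ 0 a)]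
  have h2 : 0 ≤ ∫ τ in a..b, Real.exp (-τ^2 / σ^2) :=
    intervalIntegral.integral_nonneg hab (fun u _ => (Real.exp_pos _).le)
  linarith

lemma Phi_subadd (σ : ℝ) (hσ : 0 < σ) (s t : ℝ) (hs : 0 ≤ s) (ht : 0 ≤ t) :
    Phi σ (s + t) ≤ Phi σ s + Phi σ t := by
  have h1 : Phi σ (s + t) = Phi σ s + ∫ τ in s..(s + t), Real.exp (-τ^2 / σ^2) := by
    rw [Phi, Phi, intervalIntegral.integral_add_adjacent_intervals (phi_intble σ 0 s)
      (phi_intble σ s (s + t))]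
  have h2 : (∫ τ in s..(s + t), Real.exp (-τ^2 / σ^2))
      = ∫ u in (0:ℝ)..t, Real.exp (-(u + s)^2 / σ^2) := by
    rw [intervalIntegral.integral_comp_add_right (fun τ => Real.exp (-τ^2 / σ^2)) s]
    rw [zero_add, add_comm t s]
  have hσ2 : (0:ℝ) < σ^2 := by positivity
  have h3 : (∫ u in (0:ℝ)..t, Real.exp (-(u + s)^2 / σ^2)) ≤ Phi σ t := by
    rw [Phi]
    apply intervalIntegral.integral_mono_on ht (Continuous.intervalIntegrable (by continuity) 0 t)
      (phi_intble σ 0 t)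
    intro u hu
    apply Real.exp_le_exp.mpr
    rw [div_le_div_iff_of_pos_right hσ2]
    nlinarith [hu.1]
  linarith [h1, h2 ▸ h3]

lemma Phi_abs_le (σ : ℝ) (hσ : 0 < σ) (a b : ℝ) :
    Phi σ |a| ≤ Phi σ |a - b| + Phi σ |b| := by
  calc Phi σ |a| ≤ Phi σ (|a - b| + |b|) := by
        apply Phi_mono
        calc |a| = |(a - b) + b| := by ring_nf
        _ ≤ |a - b| + |b| := abs_add_le _ _
  _ ≤ Phi σ |a - b| + Phi σ |b| := Phi_subadd σ hσ _ _ (abs_nonneg _) (abs_nonneg _)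

theorem stmt_12 (m n : ℕ) (A : Matrix (Fin m) (Fin n) ℝ) (σ : ℝ) (hσ : 0 < σ)
    (S : Finset (Fin n))
    (hNSP : ∀ v : Fin n → ℝ, A.mulVec v = 0 → v ≠ 0 →
      Jerf σ (restr S v) < Jerf σ (restr Sᶜ v)) :
    ∀ x : Fin n → ℝ, (∀ j ∉ S, x j = 0) →
      ∀ z : Fin n → ℝ, A.mulVec z = A.mulVec x → z ≠ x → Jerf σ x < Jerf σ z := by
  intro x hx z hAz hzx
  set v : Fin n → ℝ := x - z with hv
  have hAv : A.mulVec v = 0 := by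
    rw [hv, Matrix.mulVec_sub, hAz, sub_self]
  have hvne : v ≠ 0 := by
    intro h
    apply hzx
    funext j
    have := congrFun h j
    simp [hv] at this
    linarith
  have hkey := hNSP v hAv hvne
  -- J x ≤ Jerf (restr S v) + ∑ over S of Phi |z j|
  have step1 : Jerf σ x ≤ Jerf σ (restr S v) + ∑ j, (if j ∈ S then Phi σ |z j| else 0) := by
    rw [Jerf, Jerf, ← Finset.sum_add_distrib]
    apply Finset.sum_le_sum
    intro j _
    by_cases hj : j ∈ S
    · simp only [restr, hj, if_pos]
      have := Phi_abs_le σ hσ (x j) (z j)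
      simpa [hv] using this
    · simp only [restr, hj, if_neg, if_false]
      rw [hx j hj]
      simp [Phi_zero]
  have step2 : Jerf σ (restr Sᶜ v) = ∑ j, (if j ∈ S then 0 else Phi σ |z j|) := by
    rw [Jerf]
    apply Finset.sum_congr rfl
    intro j _
    by_cases hj : j ∈ S
    · simp [restr, hj, Phi_zero]
    · have : v j = -z j := by simp [hv, hx j hj]
      simp [restr, hj, this]
  have step3 : Jerf σ z = (∑ j, (if j ∈ S then Phi σ |z j| else 0))
      + ∑ j, (if j ∈ S then 0 else Phi σ |z j|) := by
    rw [Jerf, ← Finset.sum_add_distrib]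
    apply Finset.sum_congr rfl
    intro j _
    by_cases hj : j ∈ S <;> simp [hj]
  rw [step3]
  rw [step2] at hkey
  linarith
end

section
/- Let A ∈ ℝ^{m×n}, σ > 0, and S ⊆ {1,…,n}. Suppose every vector x ∈ ℝⁿ supported on S is the unique minimizer of J_σ(z) subject to Az = Ax. Then for every nonzero v ∈ ker(A), J_σ(v_S) < J_σ(v_{S^c}). -/
theorem stmt_13 (m n : ℕ) (A : Matrix (Fin m) (Fin n) ℝ) (σ : ℝ) (hσ : 0 < σ)
    (S : Finset (Fin n))
    (hmin : ∀ x : Fin n → ℝ, (∀ j ∉ S, x j = 0) →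
      ∀ z : Fin n → ℝ, A.mulVec z = A.mulVec x → z ≠ x → Jerf σ x < Jerf σ z) :
    ∀ v : Fin n → ℝ, A.mulVec v = 0 → v ≠ 0 →
      Jerf σ (restr S v) < Jerf σ (restr Sᶜ v) := by
  intro v hv hvne
  have h := hmin (restr S v) (by intro j hj; simp [restr, hj])
      (restr S v - v)
      (by rw [Matrix.mulVec_sub, hv, sub_zero])
      (by
        intro h
        exact hvne (sub_eq_self.mp h))
  have heq : Jerf σ (restr S v - v) = Jerf σ (restr Sᶜ v) := by
    unfold Jerf
    apply Finset.sum_congr rfl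
    intro j _
    by_cases hj : j ∈ S
    · simp [restr, hj]
    · simp [restr, hj, abs_neg]
  rwa [heq] at h
end
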